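/- arXiv:2010.15660 — 5 statements merged into one kernel-verified Lean document; each statement's English description precedes it below -/
import Mathlib

section
/- For every x₀ with 0 < x₀ < 1/2, the image of ℬ under the evaluation map f ↦ f(x₀, ·) ∈ C(𝕋, M₂(ℂ)) is exactly the fixed-point C*-algebra 𝒟 = {g ∈ C(𝕋, M₂(ℂ)) : g(z) = W g(−z) W* for all z ∈ 𝕋}, and the kernel of this map is {f ∈ ℬ : f(x₀, z) = 0 for all z ∈ 𝕋}. (In the paper, 𝒟 is identified with the crossed product C(𝕋) ⋊ ℤ₂, so that the fiber of CAR₁ at x₀ ∈ (0, 1/2) is C(𝕋) ⋊ ℤ₂.) -/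
open Complex Matrix

noncomputable section

abbrev TT : Type := Metric.sphere (0:ℂ) 1
abbrev Kspace : Type := Set.Icc (0:ℝ) (1/2) × TT
abbrev M2 : Type := Matrix (Fin 2) (Fin 2) ℂ

def Wmat : M2 := !![1, 0; 0, -1]
def WzMat (z : ℂ) : M2 := !![1, 0; 0, z]
def Vmat : M2 := (Real.sqrt 2 : ℂ)⁻¹ • !![1, 1; 1, -1]

def x0 : Set.Icc (0:ℝ) (1/2) := ⟨0, by norm_num⟩
def xhalf : Set.Icc (0:ℝ) (1/2) := ⟨1/2, by norm_num⟩
def ptOne : TT := ⟨1, by simp⟩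

def Bset : Set C(Kspace, M2) :=
  {f | (∀ x : Set.Icc (0:ℝ) (1/2), 0 < (x : ℝ) →
          ∀ z : TT, f (x, z) = Wmat * f (x, -z) * star Wmat)
     ∧ (∀ z : TT, f (x0, z) = WzMat z * f (x0, ptOne) * star (WzMat z))
     ∧ (∀ z : TT, (star Vmat * f (xhalf, z) * Vmat).IsDiag)}

/-- Evaluation (restriction) of `f` at the fiber over `x`, as an element of `C(𝕋, M₂(ℂ))`. -/
def resAt (x : Set.Icc (0:ℝ) (1/2)) (f : C(Kspace, M2)) : C(TT, M2) :=
  f.comp ⟨fun z => (x, z), by fun_prop⟩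

/-- The fixed-point algebra 𝒟 = {g : g(z) = W g(−z) W*} ≅ C(𝕋) ⋊ ℤ₂. -/
def Dset : Set C(TT, M2) :=
  {g | ∀ z : TT, g z = Wmat * g (-z) * star Wmat}

/-! A fiber function `g ∈ 𝒟` is spread over `[0, 1/2] × 𝕋` by a scalar tent profile that is `1`
at `x` and vanishes at both ends: conditions (ii) and (iii) hold because the result vanishes on
the end fibers, and (i) holds because it is linear in `f`. -/

def tent (a x b : ℝ) (t : ℝ) : ℝ := min ((t - a) / (x - a)) ((b - t) / (b - x))

theorem continuous_tent (a x b : ℝ) : Continuous (tent a x b) := by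
  unfold tent
  fun_prop

theorem tent_left {a x b : ℝ} (hax : a < x) (hxb : x < b) : tent a x b a = 0 := by
  rw [tent, sub_self, zero_div]
  exact min_eq_left (div_nonneg (by linarith) (by linarith))

theorem tent_right {a x b : ℝ} (hax : a < x) (hxb : x < b) : tent a x b b = 0 := by
  rw [tent, sub_self, zero_div]
  exact min_eq_right (div_nonneg (by linarith) (by linarith))

theorem tent_self {a x b : ℝ} (hax : a < x) (hxb : x < b) : tent a x b x = 1 := by
  rw [tent, div_self (sub_ne_zero.mpr hax.ne'), div_self (sub_ne_zero.mpr hxb.ne'), min_self]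

def profileSmul (φ : ℝ → ℝ) (hφ : Continuous φ) (g : C(TT, M2)) : C(Kspace, M2) :=
  ⟨fun p => (φ p.1 : ℂ) • g p.2, by fun_prop⟩

theorem resAt_profileSmul (x : Set.Icc (0:ℝ) (1/2)) {φ : ℝ → ℝ} (hφ : Continuous φ)
    (g : C(TT, M2)) : resAt x (profileSmul φ hφ g) = (φ x : ℂ) • g := rfl

theorem profileSmul_mem_Bset {φ : ℝ → ℝ} (hφ : Continuous φ) (hφ0 : φ 0 = 0)
    (hφhalf : φ (1/2) = 0) {g : C(TT, M2)} (hg : g ∈ Dset) : profileSmul φ hφ g ∈ Bset := by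
  have hx0 : ((x0 : Set.Icc (0:ℝ) (1/2)) : ℝ) = 0 := rfl
  have hxhalf : ((xhalf : Set.Icc (0:ℝ) (1/2)) : ℝ) = 1/2 := rfl
  refine ⟨fun t _ z => ?_, fun z => ?_, fun z => ?_⟩
  · simp only [profileSmul, ContinuousMap.coe_mk]
    rw [hg z, Matrix.mul_smul, Matrix.smul_mul]
  · simp only [profileSmul, ContinuousMap.coe_mk, hx0, hφ0, ofReal_zero, zero_smul, mul_zero,
      zero_mul]
  · simp only [profileSmul, ContinuousMap.coe_mk, hxhalf, hφhalf, ofReal_zero, zero_smul,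
      mul_zero, zero_mul]
    exact isDiag_zero

theorem resAt_mem_Dset {f : C(Kspace, M2)} (hf : f ∈ Bset) {x : Set.Icc (0:ℝ) (1/2)}
    (hx0 : 0 < (x : ℝ)) : resAt x f ∈ Dset :=
  hf.1 x hx0

theorem resAt_eq_zero_iff (x : Set.Icc (0:ℝ) (1/2)) (f : C(Kspace, M2)) :
    resAt x f = 0 ↔ ∀ z : TT, f (x, z) = 0 :=
  ContinuousMap.ext_iff

theorem stmt3 (x : Set.Icc (0:ℝ) (1/2)) (hx0 : 0 < (x : ℝ)) (hx1 : (x : ℝ) < 1/2) :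
    (resAt x '' Bset = Dset) ∧
    (∀ f ∈ Bset, (resAt x f = 0 ↔ ∀ z : TT, f (x, z) = 0)) := by
  refine ⟨?_, fun f _ => resAt_eq_zero_iff x f⟩
  refine Set.Subset.antisymm ?_ fun g hg => ?_
  · rintro _ ⟨f, hf, rfl⟩
    exact resAt_mem_Dset hf hx0
  · have hφ := continuous_tent 0 x (1/2)
    refine ⟨profileSmul _ hφ g,
      profileSmul_mem_Bset hφ (tent_left hx0 hx1) (tent_right hx0 hx1) hg, ?_⟩
    rw [resAt_profileSmul, tent_self hx0 hx1, Complex.ofReal_one, one_smul]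
end
end

section
/- The map φ : ℬ → C(𝕋) sending f to the function z ↦ (V* f(1/2, z) V)₁₁ (the (1,1)-entry of the diagonal matrix V* f(1/2, z) V) is a surjective unital *-algebra homomorphism onto C(𝕋), and its kernel equals {f ∈ ℬ : f(1/2, z) = 0 for all z ∈ 𝕋}. Consequently, the fiber of ℬ at x = 1/2 is *-isomorphic to C(𝕋). -/
open Complex Matrix

noncomputable section

/-- The map φ : f ↦ (z ↦ (V* f(1/2, z) V)₁₁) ∈ C(𝕋). -/
def phiHalf (f : C(Kspace, M2)) : C(TT, ℂ) :=
  ⟨fun z => (star Vmat * f (xhalf, z) * Vmat) 0 0, by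
    have h : Continuous fun z : TT => f (xhalf, z) :=
      f.continuous.comp (by fun_prop)
    exact ((continuous_const.matrix_mul h).matrix_mul continuous_const).matrix_elem 0 0⟩

/-!
Since V is a self-adjoint unitary, A ↦ V* A V is a ⋆-automorphism of M₂(ℂ), and φ f reads the
(0,0) entry of the diagonal matrix V* f(1/2, z) V; diagonality makes that entry multiplicative.
Conjugating W by V gives the swap matrix, so the symmetry f(1/2, z) = W f(1/2, -z) W* says that the
(1,1) entry at z is φ f (-z): φ f = 0 forces V* f(1/2, z) V = 0. A preimage of h is
2x · V diag(h z, h (-z)) V*, which vanishes at x = 0 and satisfies the W-symmetry because the swap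
exchanges the two diagonal entries.
-/

lemma Matrix.IsDiag.mul_apply_self {n α : Type*} [Fintype n] [DecidableEq n]
    [NonUnitalNonAssocSemiring α] {A : Matrix n n α} (hA : A.IsDiag) (B : Matrix n n α) (i : n) :
    (A * B) i i = A i i * B i i := by
  nth_rw 1 [← hA.diagonal_diag]
  rw [diagonal_mul, diag_apply]

lemma star_Vmat : star Vmat = Vmat := by
  ext i j
  fin_cases i <;> fin_cases j <;> simp [Vmat, Matrix.star_apply]

lemma inv_sqrt_two_mul_self : (Real.sqrt 2 : ℂ)⁻¹ * (Real.sqrt 2 : ℂ)⁻¹ = 1 / 2 := by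
  rw [← mul_inv, ← Complex.ofReal_mul, Real.mul_self_sqrt (by norm_num)]; norm_num

lemma Vmat_mul_Vmat : Vmat * Vmat = 1 := by
  ext i j
  fin_cases i <;> fin_cases j <;>
    simp [Vmat, Matrix.mul_apply, Fin.sum_univ_two, inv_sqrt_two_mul_self] <;> norm_num

def Vunitary : unitary M2 :=
  ⟨Vmat, Unitary.mem_iff.2 ⟨by rw [star_Vmat, Vmat_mul_Vmat], by rw [star_Vmat, Vmat_mul_Vmat]⟩⟩

abbrev conjV : M2 ≃⋆ₐ[ℂ] M2 := Unitary.conjStarAlgAut ℂ M2 (star Vunitary)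

lemma conjV_apply (A : M2) : conjV A = star Vmat * A * Vmat :=
  Unitary.conjStarAlgAut_star_apply _ _

lemma conjV_symm_apply (A : M2) : conjV.symm A = Vmat * A * star Vmat := by
  simp [conjV, Vunitary]

def swapMat : M2 := !![0, 1; 1, 0]

lemma conjV_Wmat : conjV Wmat = swapMat := by
  rw [conjV_apply, star_Vmat]
  ext i j
  fin_cases i <;> fin_cases j <;>
    simp [swapMat, Vmat, Wmat, Matrix.mul_apply, Fin.sum_univ_two, inv_sqrt_two_mul_self] <;> norm_num

lemma swap_conj_apply_one_one (A : M2) :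
    (swapMat * A * star swapMat) 1 1 = A 0 0 := by
  simp [swapMat, Matrix.mul_apply, Fin.sum_univ_two, Matrix.star_apply, Matrix.vecMul, dotProduct]

lemma swap_conj_diagonal (a b : ℂ) :
    swapMat * diagonal ![a, b] * star swapMat = diagonal ![b, a] := by
  ext i j
  fin_cases i <;> fin_cases j <;>
    simp [swapMat, Matrix.mul_apply, Fin.sum_univ_two, Matrix.star_apply, Matrix.vecMul, dotProduct]

lemma conjV_Wmat_conj (B : M2) :
    conjV (Wmat * B * star Wmat) = swapMat * conjV B * star swapMat := by
  rw [map_mul, map_mul, map_star, conjV_Wmat]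

lemma phiHalf_apply (f : C(Kspace, M2)) (z : TT) : phiHalf f z = conjV (f (xhalf, z)) 0 0 := by
  rw [conjV_apply]; rfl

lemma conjV_isDiag_of_mem {f : C(Kspace, M2)} (hf : f ∈ Bset) (z : TT) :
    (conjV (f (xhalf, z))).IsDiag := by
  rw [conjV_apply]; exact hf.2.2 z

lemma phiHalf_mul {f : C(Kspace, M2)} (hf : f ∈ Bset) (g : C(Kspace, M2)) :
    phiHalf (f * g) = phiHalf f * phiHalf g := by
  ext z
  simp only [phiHalf_apply, ContinuousMap.mul_apply, map_mul]
  exact (conjV_isDiag_of_mem hf z).mul_apply_self _ 0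

lemma phiHalf_add (f g : C(Kspace, M2)) : phiHalf (f + g) = phiHalf f + phiHalf g := by
  ext z
  simp only [phiHalf_apply, ContinuousMap.add_apply, map_add, Matrix.add_apply]

lemma phiHalf_smul (c : ℂ) (f : C(Kspace, M2)) : phiHalf (c • f) = c • phiHalf f := by
  ext z
  simp only [phiHalf_apply, ContinuousMap.smul_apply, map_smul, Matrix.smul_apply]

lemma phiHalf_one : phiHalf 1 = 1 := by
  ext z
  simp [phiHalf_apply]

lemma phiHalf_star (f : C(Kspace, M2)) : phiHalf (star f) = star (phiHalf f) := by
  ext z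
  simp only [phiHalf_apply, ContinuousMap.star_apply, map_star, Matrix.star_apply]

lemma phiHalf_eq_zero_iff {f : C(Kspace, M2)} (hf : f ∈ Bset) :
    phiHalf f = 0 ↔ ∀ z : TT, f (xhalf, z) = 0 := by
  refine ⟨fun h0 z => ?_, fun h0 => ?_⟩
  · have hz : conjV (f (xhalf, z)) 0 0 = 0 := by simpa [phiHalf_apply] using congr($h0 z)
    have hnz : conjV (f (xhalf, -z)) 0 0 = 0 := by simpa [phiHalf_apply] using congr($h0 (-z))
    have h11 : conjV (f (xhalf, z)) 1 1 = 0 := by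
      rw [hf.1 xhalf (by norm_num [xhalf]) z, conjV_Wmat_conj, swap_conj_apply_one_one, hnz]
    have hdiag : (conjV (f (xhalf, z))).diag = 0 := funext (Fin.forall_fin_two.2 ⟨hz, h11⟩)
    rw [← map_eq_zero_iff conjV conjV.injective, ← (conjV_isDiag_of_mem hf z).diagonal_diag,
      hdiag, diagonal_zero']
  · ext z
    simp [phiHalf_apply, h0 z]

lemma Wmat_conj_conjV_symm_diagonal (a b : ℂ) :
    Wmat * conjV.symm (diagonal ![a, b]) * star Wmat = conjV.symm (diagonal ![b, a]) := by
  rw [conjV.eq_symm_apply, conjV_Wmat_conj, StarAlgEquiv.apply_symm_apply, swap_conj_diagonal]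

def liftHalf (h : C(TT, ℂ)) : C(Kspace, M2) :=
  ⟨fun p => ((2 * p.1 : ℝ) : ℂ) • conjV.symm (diagonal ![h p.2, h (-p.2)]), by
    have hconj : Continuous (conjV.symm : M2 → M2) := by
      simp only [funext conjV_symm_apply]
      exact (continuous_const.matrix_mul continuous_id).matrix_mul continuous_const
    fun_prop⟩

lemma liftHalf_mem (h : C(TT, ℂ)) : liftHalf h ∈ Bset := by
  refine ⟨fun x _ z => ?_, fun z => ?_, fun z => ?_⟩
  · simp only [liftHalf, ContinuousMap.coe_mk, neg_neg, mul_smul_comm, smul_mul_assoc,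
      Wmat_conj_conjV_symm_diagonal]
  · simp [liftHalf, x0]
  · simp only [liftHalf, ContinuousMap.coe_mk, ← conjV_apply, map_smul,
      StarAlgEquiv.apply_symm_apply]
    exact (isDiag_diagonal _).smul _

lemma phiHalf_liftHalf (h : C(TT, ℂ)) : phiHalf (liftHalf h) = h := by
  ext z
  simp only [phiHalf_apply, liftHalf, ContinuousMap.coe_mk, map_smul,
    StarAlgEquiv.apply_symm_apply]
  norm_num [xhalf]

theorem stmt4 :
    (∀ f ∈ Bset, ∀ g ∈ Bset, phiHalf (f * g) = phiHalf f * phiHalf g) ∧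
    (∀ f ∈ Bset, ∀ g ∈ Bset, phiHalf (f + g) = phiHalf f + phiHalf g) ∧
    (∀ (c : ℂ), ∀ f ∈ Bset, phiHalf (c • f) = c • phiHalf f) ∧
    phiHalf 1 = 1 ∧
    (∀ f ∈ Bset, phiHalf (star f) = star (phiHalf f)) ∧
    (∀ h : C(TT, ℂ), ∃ f ∈ Bset, phiHalf f = h) ∧
    (∀ f ∈ Bset, (phiHalf f = 0 ↔ ∀ z : TT, f (xhalf, z) = 0)) :=
  ⟨fun _ hf g _ => phiHalf_mul hf g,
    fun f _ g _ => phiHalf_add f g,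
    fun c f _ => phiHalf_smul c f,
    phiHalf_one,
    fun f _ => phiHalf_star f,
    fun h => ⟨liftHalf h, liftHalf_mem h, phiHalf_liftHalf h⟩,
    fun _ hf => phiHalf_eq_zero_iff hf⟩
end
end

section
/- With respect to the twisted product ⋆ (twist by Θ/2) the elements a₁, …, aₙ satisfy the Θ-deformed CAR relations: a_i* ⋆ a_i + a_i ⋆ a_i* = 1 for all i; a_i* ⋆ a_j = e^{2πiΘ_{i,j}} a_j ⋆ a_i* for all i ≠ j; and a_i ⋆ a_j = e^{−2πiΘ_{i,j}} a_j ⋆ a_i for all i ≠ j. (This is the computation showing that the generators of CAR_Θ map to the generators of the Rieffel deformation (CAR₁^{⊗n})^{Θ/2}.) -/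
open Complex Matrix

noncomputable section

/-! Because `Θ` is skew, the phase `⟨Θ(p), q⟩` is antisymmetric in `(p, q)` and vanishes on
`(p, ±p)`. Hence commuting homogeneous elements of degrees `p, q` become
`e^{2πi⟨Θ(p), q⟩}`-commuting for `⋆`, while the products `a_i* a_i` and `a_i a_i*` are not
twisted at all, so the CAR relation survives unchanged. -/

/-- `⟨Θ(p), q⟩ = Σ_l (Θp)_l q_l`. -/
def pairTheta {n : ℕ} (Θ : Matrix (Fin n) (Fin n) ℝ) (p q : Fin n → ℤ) : ℝ :=
  ∑ l, (∑ j, Θ l j * (p j : ℝ)) * (q l : ℝ)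

/-- The `i`-th standard basis vector of `ℤⁿ`. -/
def deltaVec {n : ℕ} (i : Fin n) : Fin n → ℤ := fun j => if j = i then 1 else 0

section PairTheta

variable {n : ℕ} (Θ : Matrix (Fin n) (Fin n) ℝ)

lemma pairTheta_neg_left (p q : Fin n → ℤ) : pairTheta Θ (-p) q = -pairTheta Θ p q := by
  simp [pairTheta, Finset.sum_neg_distrib]

lemma pairTheta_deltaVec (i j : Fin n) : pairTheta Θ (deltaVec i) (deltaVec j) = Θ j i := by
  simp [pairTheta, deltaVec, mul_ite]

variable {Θ}

lemma apply_swap_of_transpose_eq_neg (hΘ : Θᵀ = -Θ) (i j : Fin n) : Θ j i = -Θ i j := by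
  simpa using congrFun (congrFun hΘ i) j

lemma pairTheta_swap (hΘ : Θᵀ = -Θ) (p q : Fin n → ℤ) :
    pairTheta Θ q p = -pairTheta Θ p q := by
  simp only [pairTheta, Finset.sum_mul, ← Finset.sum_neg_distrib]
  rw [Finset.sum_comm]
  refine Finset.sum_congr rfl fun l _ => Finset.sum_congr rfl fun j _ => ?_
  rw [apply_swap_of_transpose_eq_neg hΘ]
  ring

lemma pairTheta_self (hΘ : Θᵀ = -Θ) (p : Fin n → ℤ) : pairTheta Θ p p = 0 := by
  linarith [pairTheta_swap hΘ p p]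

lemma pairTheta_neg_right (hΘ : Θᵀ = -Θ) (p q : Fin n → ℤ) :
    pairTheta Θ p (-q) = -pairTheta Θ p q := by
  rw [pairTheta_swap hΘ, pairTheta_neg_left, pairTheta_swap hΘ, neg_neg]

end PairTheta

section TwistedProduct

variable {n : ℕ} {Θ : Matrix (Fin n) (Fin n) ℝ} {A : Type*} [Ring A] [Algebra ℂ A]
  {𝒜 : (Fin n → ℤ) → Submodule ℂ A} {P : A →ₗ[ℂ] A →ₗ[ℂ] A}

lemma twisted_eq_mul_of_pairTheta_eq_zero
    (hP : ∀ (p q : Fin n → ℤ), ∀ a ∈ 𝒜 p, ∀ b ∈ 𝒜 q,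
      P a b = Complex.exp (Real.pi * Complex.I * (pairTheta Θ p q : ℂ)) • (a * b))
    {p q : Fin n → ℤ} {a b : A} (ha : a ∈ 𝒜 p) (hb : b ∈ 𝒜 q) (hpq : pairTheta Θ p q = 0) :
    P a b = a * b := by
  simp [hP p q a ha b hb, hpq]

lemma twisted_comm_of_commute (hΘ : Θᵀ = -Θ)
    (hP : ∀ (p q : Fin n → ℤ), ∀ a ∈ 𝒜 p, ∀ b ∈ 𝒜 q,
      P a b = Complex.exp (Real.pi * Complex.I * (pairTheta Θ p q : ℂ)) • (a * b))
    {p q : Fin n → ℤ} {a b : A} (ha : a ∈ 𝒜 p) (hb : b ∈ 𝒜 q) (hab : a * b = b * a) :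
    P a b = Complex.exp (2 * Real.pi * Complex.I * (pairTheta Θ p q : ℂ)) • P b a := by
  rw [hP p q a ha b hb, hP q p b hb a ha, pairTheta_swap hΘ, ← hab, smul_smul,
    ← Complex.exp_add]
  congr 2
  push_cast
  ring

end TwistedProduct

theorem stmt7_general {n : ℕ} (Θ : Matrix (Fin n) (Fin n) ℝ) (hΘ : Θᵀ = -Θ)
    (A : Type*) [Ring A] [Algebra ℂ A] [StarRing A]
    -- the ℤⁿ-grading
    (𝒜 : (Fin n → ℤ) → Submodule ℂ A)
    (hgstar : ∀ (p : Fin n → ℤ), ∀ a ∈ 𝒜 p, star a ∈ 𝒜 (-p))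
    -- the twisted product ⋆ (twist by Θ/2): a ⋆ b = e^{πi⟨Θ(p),q⟩} a b on homogeneous elements
    (P : A →ₗ[ℂ] A →ₗ[ℂ] A)
    (hP : ∀ (p q : Fin n → ℤ), ∀ a ∈ 𝒜 p, ∀ b ∈ 𝒜 q,
      P a b = Complex.exp (Real.pi * Complex.I * (pairTheta Θ p q : ℂ)) • (a * b))
    -- the generators
    (a : Fin n → A)
    (hadeg : ∀ i, a i ∈ 𝒜 (deltaVec i))
    (haCAR : ∀ i, star (a i) * a i + a i * star (a i) = 1)
    (hacomm : ∀ i j, i ≠ j → a i * a j = a j * a i)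
    (hascomm : ∀ i j, i ≠ j → star (a i) * a j = a j * star (a i)) :
    (∀ i, P (star (a i)) (a i) + P (a i) (star (a i)) = 1) ∧
    (∀ i j, i ≠ j → P (star (a i)) (a j) =
      Complex.exp (2 * Real.pi * Complex.I * (Θ i j : ℂ)) • P (a j) (star (a i))) ∧
    (∀ i j, i ≠ j → P (a i) (a j) =
      Complex.exp (-(2 * Real.pi * Complex.I * (Θ i j : ℂ))) • P (a j) (a i)) := by
  have hastar : ∀ i, star (a i) ∈ 𝒜 (-deltaVec i) := fun i => hgstar _ _ (hadeg i)
  refine ⟨fun i => ?_, fun i j hij => ?_, fun i j hij => ?_⟩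
  · rw [twisted_eq_mul_of_pairTheta_eq_zero hP (hastar i) (hadeg i)
        (by rw [pairTheta_neg_left, pairTheta_self hΘ, neg_zero]),
      twisted_eq_mul_of_pairTheta_eq_zero hP (hadeg i) (hastar i)
        (by rw [pairTheta_neg_right hΘ, pairTheta_self hΘ, neg_zero]),
      haCAR i]
  · rw [twisted_comm_of_commute hΘ hP (hastar i) (hadeg j) (hascomm i j hij),
      pairTheta_neg_left, pairTheta_deltaVec, apply_swap_of_transpose_eq_neg hΘ, neg_neg]
  · rw [twisted_comm_of_commute hΘ hP (hadeg i) (hadeg j) (hacomm i j hij),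
      pairTheta_deltaVec, apply_swap_of_transpose_eq_neg hΘ, Complex.ofReal_neg, mul_neg]

theorem stmt7 {n : ℕ} (Θ : Matrix (Fin n) (Fin n) ℝ) (hΘ : Θᵀ = -Θ)
    (A : Type*) [Ring A] [Algebra ℂ A] [StarRing A] [StarModule ℂ A]
    -- the ℤⁿ-grading
    (𝒜 : (Fin n → ℤ) → Submodule ℂ A)
    (hdirect : DirectSum.IsInternal 𝒜)
    (hgmul : ∀ (p q : Fin n → ℤ), ∀ a ∈ 𝒜 p, ∀ b ∈ 𝒜 q, a * b ∈ 𝒜 (p + q))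
    (hgone : (1 : A) ∈ 𝒜 0)
    (hgstar : ∀ (p : Fin n → ℤ), ∀ a ∈ 𝒜 p, star a ∈ 𝒜 (-p))
    -- the twisted product ⋆ (twist by Θ/2): a ⋆ b = e^{πi⟨Θ(p),q⟩} a b on homogeneous elements
    (P : A →ₗ[ℂ] A →ₗ[ℂ] A)
    (hP : ∀ (p q : Fin n → ℤ), ∀ a ∈ 𝒜 p, ∀ b ∈ 𝒜 q,
      P a b = Complex.exp (Real.pi * Complex.I * (pairTheta Θ p q : ℂ)) • (a * b))
    -- the generators
    (a : Fin n → A)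
    (hadeg : ∀ i, a i ∈ 𝒜 (deltaVec i))
    (haCAR : ∀ i, star (a i) * a i + a i * star (a i) = 1)
    (hacomm : ∀ i j, i ≠ j → a i * a j = a j * a i)
    (hascomm : ∀ i j, i ≠ j → star (a i) * a j = a j * star (a i)) :
    (∀ i, P (star (a i)) (a i) + P (a i) (star (a i)) = 1) ∧
    (∀ i j, i ≠ j → P (star (a i)) (a j) =
      Complex.exp (2 * Real.pi * Complex.I * (Θ i j : ℂ)) • P (a j) (star (a i))) ∧
    (∀ i j, i ≠ j → P (a i) (a j) =
      Complex.exp (-(2 * Real.pi * Complex.I * (Θ i j : ℂ))) • P (a j) (a i)) :=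
  stmt7_general Θ hΘ A 𝒜 hgstar P hP a hadeg haCAR hacomm hascomm
end
end

section
/- Let 𝒟 = {g ∈ C(𝕋, M₂(ℂ)) : g(z) = W g(−z) W* for all z ∈ 𝕋} and let u ∈ C(𝕋, M₂(ℂ)) be the unitary element u(z) = [[0, 1], [z, 0]]. Then the conjugation g ↦ u g u* maps 𝒟 onto the subalgebra {h ∈ C(𝕋, M₂(ℂ)) : h(z) = h(−z) for all z ∈ 𝕋} of even functions, and consequently 𝒟 is *-isomorphic to C(𝕋, M₂(ℂ)). (This realizes the isomorphism C(𝕋) ⋊ ℤ₂ ≅ M₂(C(𝕋)) used in the analysis of the fibers of CAR_Θ.) -/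
open Complex Matrix

noncomputable section

lemma star_Wmat : star Wmat = Wmat := by
  ext i j
  fin_cases i <;> fin_cases j <;>
    simp [Wmat, Matrix.star_apply]

lemma Wmat_mul_Wmat : Wmat * Wmat = 1 := by
  ext i j
  fin_cases i <;> fin_cases j <;>
    simp [Wmat, Matrix.mul_apply, Fin.sum_univ_two, Matrix.one_apply]

lemma Wmat_mul_star : Wmat * star Wmat = 1 := by rw [star_Wmat, Wmat_mul_Wmat]

lemma star_Wmat_mul : star Wmat * Wmat = 1 := by rw [star_Wmat, Wmat_mul_Wmat]

/-- The fixed-point algebra 𝒟 = {g ∈ C(𝕋, M₂(ℂ)) : g(z) = W g(−z) W*}, as a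
unital *-subalgebra of C(𝕋, M₂(ℂ)). -/
def Dsub : StarSubalgebra ℂ C(TT, M2) where
  carrier := {g | ∀ z : TT, g z = Wmat * g (-z) * star Wmat}
  mul_mem' := by
    intro f g hf hg z
    simp only [ContinuousMap.mul_apply]
    rw [hf z, hg z]
    calc Wmat * f (-z) * star Wmat * (Wmat * g (-z) * star Wmat)
        = Wmat * (f (-z) * (star Wmat * Wmat) * g (-z)) * star Wmat := by
          simp only [Matrix.mul_assoc]
      _ = Wmat * (f (-z) * g (-z)) * star Wmat := by
          rw [star_Wmat_mul, Matrix.mul_one]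
  add_mem' := by
    intro f g hf hg z
    simp only [ContinuousMap.add_apply]
    rw [hf z, hg z, Matrix.mul_add, Matrix.add_mul]
  algebraMap_mem' := by
    intro c z
    simp only [algebraMap_apply]
    rw [Matrix.mul_smul, Matrix.smul_mul, Matrix.mul_one, Wmat_mul_star]
  star_mem' := by
    intro f hf z
    simp only [ContinuousMap.star_apply]
    rw [hf z]
    simp only [Matrix.star_mul, star_star, star_Wmat, Matrix.mul_assoc]

/-- The unitary u(z) = [[0,1],[z,0]]. -/
def uMap (z : TT) : M2 := !![0, 1; (z : ℂ), 0]

/-! Since `u(-z) W = -u(z)`, conjugation by `u` intertwines `g ↦ W g(-·) W*` with `h ↦ h(-·)`,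
so it carries `𝒟` onto the even functions. The squaring map `𝕋 → 𝕋` is a quotient map whose
fibres are the pairs `{z, -z}`, so the even functions are exactly the `f ∘ (·)²`, and
`f ↦ u* (f ∘ (·)²) u` is a *-isomorphism `C(𝕋, M₂(ℂ)) ≃ 𝒟`. -/

lemma ContinuousMap.mem_unitary_of_forall_mem_unitary {X R : Type*} [TopologicalSpace X]
    [TopologicalSpace R] [Monoid R] [StarMul R] [ContinuousMul R] [ContinuousStar R]
    (f : C(X, R)) (hf : ∀ x, f x ∈ unitary R) : f ∈ unitary C(X, R) :=
  Unitary.mem_iff.2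
    ⟨ext fun x => (Unitary.mem_iff.1 (hf x)).1, ext fun x => (Unitary.mem_iff.1 (hf x)).2⟩

lemma Topology.IsQuotientMap.exists_comp_eq_iff {X Y Z : Type*} [TopologicalSpace X]
    [TopologicalSpace Y] [TopologicalSpace Z] {q : C(X, Y)} (hq : IsQuotientMap q)
    (g : C(X, Z)) : (∃ f : C(Y, Z), f.comp q = g) ↔ Function.FactorsThrough g q := by
  constructor
  · rintro ⟨f, rfl⟩ a b hab
    simp [hab]
  · exact fun hg => ⟨hq.lift g hg, hq.lift_comp g hg⟩

lemma uMap_mem_unitary (z : TT) : uMap z ∈ unitary M2 := by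
  have hz : (z : ℂ) * starRingEnd ℂ z = 1 := by
    rw [Complex.mul_conj', norm_eq_of_mem_sphere z]
    norm_num
  rw [Matrix.mem_unitaryGroup_iff]
  ext i j
  fin_cases i <;> fin_cases j <;> simp [uMap, Matrix.mul_apply, hz]

lemma uMap_neg_mul_Wmat (z : TT) : uMap (-z) * Wmat = -uMap z := by
  ext i j
  fin_cases i <;> fin_cases j <;> simp [uMap, Wmat, Matrix.mul_apply]

lemma uMap_mul_conj_Wmat (z : TT) (A : M2) :
    uMap z * (Wmat * A * star Wmat) * star (uMap z) = uMap (-z) * A * star (uMap (-z)) := by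
  have h : uMap z * Wmat = -uMap (-z) := by simpa using uMap_neg_mul_Wmat (-z)
  calc uMap z * (Wmat * A * star Wmat) * star (uMap z)
      = uMap z * Wmat * A * star (uMap z * Wmat) := by simp only [star_mul, mul_assoc]
    _ = uMap (-z) * A * star (uMap (-z)) := by simp [h]

def uUnitary : unitary C(TT, M2) :=
  ⟨⟨uMap, by
      refine continuous_matrix fun i j => ?_
      fin_cases i <;> fin_cases j <;> simp [uMap] <;> fun_prop⟩,
    ContinuousMap.mem_unitary_of_forall_mem_unitary _ uMap_mem_unitary⟩

def uConj : C(TT, M2) ≃⋆ₐ[ℂ] C(TT, M2) := Unitary.conjStarAlgAut ℂ _ uUnitary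

lemma uConj_apply (g : C(TT, M2)) (z : TT) : uConj g z = uMap z * g z * star (uMap z) := rfl

lemma mem_Dsub_iff_uConj_even (g : C(TT, M2)) : g ∈ Dsub ↔ ∀ z, uConj g z = uConj g (-z) := by
  refine forall_congr' fun z => ?_
  have hinj := (Unitary.conjStarAlgAut ℂ M2 ⟨uMap z, uMap_mem_unitary z⟩).injective
  rw [uConj_apply, uConj_apply, ← uMap_mul_conj_Wmat]
  exact hinj.eq_iff.symm

lemma uConj_image_Dsub : uConj '' Dsub = {h | ∀ z, h z = h (-z)} := by
  ext h
  constructor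
  · rintro ⟨g, hg, rfl⟩
    exact (mem_Dsub_iff_uConj_even g).1 hg
  · intro he
    exact ⟨uConj.symm h, (mem_Dsub_iff_uConj_even _).2 (by simpa using he), by simp⟩

def sqTT : C(TT, TT) := ⟨fun z => z ^ 2, by fun_prop⟩

lemma sqTT_surjective : Function.Surjective sqTT := by
  intro w
  obtain ⟨a, ha⟩ := IsAlgClosed.exists_pow_nat_eq (w : ℂ) two_pos
  have hnorm : ‖a‖ = 1 := by
    have := congrArg norm ha
    rw [norm_pow, norm_eq_of_mem_sphere w] at this
    exact (pow_eq_one_iff_of_nonneg (norm_nonneg a) two_ne_zero).1 this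
  exact ⟨⟨a, by simpa using hnorm⟩, Subtype.ext ha⟩

lemma sqTT_eq_sqTT_iff {z z' : TT} : sqTT z = sqTT z' ↔ z = z' ∨ z = -z' := by
  simp only [sqTT, ContinuousMap.coe_mk, Subtype.ext_iff, Metric.unitSphere.coe_pow,
    coe_neg_sphere]
  exact sq_eq_sq_iff_eq_or_eq_neg

lemma isQuotientMap_sqTT : Topology.IsQuotientMap sqTT :=
  sqTT.continuous.isClosedMap.isQuotientMap sqTT.continuous sqTT_surjective

lemma factorsThrough_sqTT_iff {Z : Type*} (h : TT → Z) :
    Function.FactorsThrough h sqTT ↔ ∀ z, h z = h (-z) := by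
  refine ⟨fun hh z => hh (sqTT_eq_sqTT_iff.2 (Or.inr (neg_neg z).symm)), fun he a b hab => ?_⟩
  rcases sqTT_eq_sqTT_iff.1 hab with rfl | rfl
  exacts [rfl, (he b).symm]

lemma range_uConj_symm_comp_sqTT :
    ((uConj.symm : C(TT, M2) →⋆ₐ[ℂ] C(TT, M2)).comp
      (ContinuousMap.compStarAlgHom' ℂ M2 sqTT)).range = Dsub := by
  ext g
  calc g ∈ ((uConj.symm : C(TT, M2) →⋆ₐ[ℂ] C(TT, M2)).comp
        (ContinuousMap.compStarAlgHom' ℂ M2 sqTT)).range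
      ↔ ∃ f : C(TT, M2), f.comp sqTT = uConj g :=
        exists_congr fun f => uConj.symm_apply_eq
    _ ↔ ∀ z, uConj g z = uConj g (-z) := by
        rw [isQuotientMap_sqTT.exists_comp_eq_iff, factorsThrough_sqTT_iff]
    _ ↔ g ∈ Dsub := (mem_Dsub_iff_uConj_even g).symm

theorem stmt12 :
    ({h : C(TT, M2) | ∃ g ∈ Dsub, ∀ z : TT, h z = uMap z * g z * star (uMap z)} =
      {h : C(TT, M2) | ∀ z : TT, h z = h (-z)}) ∧
    Nonempty (Dsub ≃⋆ₐ[ℂ] C(TT, M2)) := by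
  refine ⟨?_, ?_⟩
  · rw [← uConj_image_Dsub]
    ext h
    simp [ContinuousMap.ext_iff, uConj_apply, eq_comm]
  · rw [← range_uConj_symm_comp_sqTT]
    exact ⟨(StarAlgEquiv.ofInjective _ (uConj.symm.injective.comp
      fun _ _ => (ContinuousMap.cancel_right sqTT_surjective).1)).symm⟩
end
end

section
/- Let (x₁, z₁), (x₂, z₂) ∈ [0, 1/2] × 𝕋, and for j = 1, 2 set π_j = z_j · [[0, √(x_j)], [√(1−x_j), 0]] ∈ M₂(ℂ). Suppose that it is not the case that (x₁ = x₂ and z₂ = ±z₁), and not the case that x₁ = x₂ = 0. Then the only matrix C ∈ M₂(ℂ) satisfying C π₂ = π₁ C and C π₂* = π₁* C is C = 0. (That is, the representations π_{x₁,z₁} and π_{x₂,z₂} of the CAR relation a*a + aa* = 1 are disjoint.) -/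
open Complex Matrix

noncomputable section

/-- The 2-dimensional CAR representation matrix `π_{x,z}(a) = z·[[0,√x],[√(1−x),0]]`. -/
def piMat (x : ℝ) (z : ℂ) : Matrix (Fin 2) (Fin 2) ℂ :=
  z • !![0, (Real.sqrt x : ℂ); (Real.sqrt (1 - x) : ℂ), 0]

/-!
An intertwiner `C` of `π₂` and `π₁` that also intertwines their adjoints intertwines all
products of them. If `x₁ = x₂ = x`, then `π_{x,z}² = z² √x √(1-x) · 1` is scalar, so
`z₂² √x √(1-x) C = z₁² √x √(1-x) C`, which forces `C = 0` as `z₂ ≠ ±z₁` and `x ≠ 0`.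
If `x₁ ≠ x₂`, then `π*π = diag(1 - x, x)` because `|z| = 1`, and `C` intertwines two diagonal
matrices with no common diagonal value (`x₁ + x₂ < 1`), so every entry of `C` vanishes.
-/

theorem SemiconjBy.eq_zero_of_smul_one {K A : Type*} [Field K] [Ring A] [Algebra K A]
    {C : A} {c₁ c₂ : K} (h : SemiconjBy C (c₂ • 1) (c₁ • 1)) (hc : c₁ ≠ c₂) : C = 0 := by
  have : (c₂ - c₁) • C = 0 := by
    have h' : C * (c₂ • 1) = (c₁ • 1) * C := h
    rwa [mul_smul_comm, smul_mul_assoc, mul_one, one_mul, ← sub_eq_zero, ← sub_smul] at h'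
  exact (smul_eq_zero.mp this).resolve_left (sub_ne_zero.mpr hc.symm)

theorem Matrix.apply_eq_zero_of_semiconjBy_diagonal {n R : Type*} [Fintype n] [DecidableEq n]
    [CommRing R] [NoZeroDivisors R] {C : Matrix n n R} {d e : n → R}
    (h : SemiconjBy C (diagonal d) (diagonal e)) {i j : n} (hij : d j ≠ e i) : C i j = 0 := by
  have hentry : C i j * d j = e i * C i j := by
    simpa only [mul_diagonal, diagonal_mul] using congrFun (congrFun h i) j
  have hprod : C i j * (d j - e i) = 0 := by rw [mul_sub, hentry, mul_comm, sub_self]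
  exact (mul_eq_zero.mp hprod).resolve_right (sub_ne_zero.mpr hij)

theorem piMat_mul_self (x : ℝ) (z : ℂ) :
    piMat x z * piMat x z = (z ^ 2 * (Real.sqrt x * Real.sqrt (1 - x))) • 1 := by
  ext i j
  fin_cases i <;> fin_cases j <;> simp [piMat] <;> ring

theorem star_piMat_mul_piMat {x : ℝ} (hx : x ∈ Set.Icc (0 : ℝ) 1) {z : ℂ} (hz : ‖z‖ = 1) :
    star (piMat x z) * piMat x z = diagonal ![1 - (x : ℂ), x] := by
  have hzz : star z * z = 1 := by rw [mul_comm, star_def, mul_conj', hz]; norm_num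
  have ha : (Real.sqrt x : ℂ) * Real.sqrt x = x := by
    rw [← ofReal_mul, Real.mul_self_sqrt hx.1]
  have hb : (Real.sqrt (1 - x) : ℂ) * Real.sqrt (1 - x) = 1 - x := by
    rw [← ofReal_mul, Real.mul_self_sqrt (sub_nonneg.2 hx.2), ofReal_sub, ofReal_one]
  rw [piMat, star_smul, smul_mul_smul_comm, hzz, one_smul]
  ext i j
  fin_cases i <;> fin_cases j <;> simp [star_eq_conjTranspose, mul_apply, ha, hb]

theorem stmt13 (x₁ x₂ : ℝ) (hx₁ : x₁ ∈ Set.Icc (0:ℝ) (1/2)) (hx₂ : x₂ ∈ Set.Icc (0:ℝ) (1/2))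
    (z₁ z₂ : ℂ) (hz₁ : ‖z₁‖ = 1) (hz₂ : ‖z₂‖ = 1)
    (hsep : ¬(x₁ = x₂ ∧ (z₂ = z₁ ∨ z₂ = -z₁)))
    (hzero : ¬(x₁ = 0 ∧ x₂ = 0))
    (C : Matrix (Fin 2) (Fin 2) ℂ)
    (h1 : C * piMat x₂ z₂ = piMat x₁ z₁ * C)
    (h2 : C * star (piMat x₂ z₂) = star (piMat x₁ z₁) * C) :
    C = 0 := by
  by_cases hx : x₁ = x₂
  · subst hx
    have hroot : (Real.sqrt x₁ * Real.sqrt (1 - x₁) : ℂ) ≠ 0 := by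
      have hpos : 0 < x₁ := lt_of_le_of_ne hx₁.1 (fun h => hzero ⟨h.symm, h.symm⟩)
      exact mul_ne_zero (ofReal_ne_zero.2 (Real.sqrt_ne_zero'.2 hpos))
        (ofReal_ne_zero.2 (Real.sqrt_ne_zero'.2 (by linarith [hx₁.2])))
    have hsquare : z₁ ^ 2 ≠ z₂ ^ 2 := by
      rw [Ne, eq_comm, sq_eq_sq_iff_eq_or_eq_neg]
      exact fun h => hsep ⟨rfl, h⟩
    have hsq := SemiconjBy.mul_right h1 h1
    rw [piMat_mul_self, piMat_mul_self] at hsq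
    exact hsq.eq_zero_of_smul_one ((mul_left_injective₀ hroot).ne hsquare)
  · have hdiag := SemiconjBy.mul_right h2 h1
    rw [star_piMat_mul_piMat ⟨hx₁.1, by linarith [hx₁.2]⟩ hz₁,
      star_piMat_mul_piMat ⟨hx₂.1, by linarith [hx₂.2]⟩ hz₂] at hdiag
    ext i j
    apply apply_eq_zero_of_semiconjBy_diagonal hdiag
    fin_cases i <;> fin_cases j <;> simp <;> norm_cast <;> grind
end
end
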